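/- Let p be an everywhere positive, continuously differentiable probability density on ℝ^d whose score s = ∇ log p is (L, β)-Hölder continuous for some 0 < β ≤ 1, and for t > 0 let p_t be the density of p * N(0, t I_d). Then for every t > 0 and every y ∈ ℝ^d, log( p(y) / p_t(y) ) ≤ L (t d)^{(1+β)/2}. -/

import Mathlib

/-!
Along the line `u ↦ y - u • z`, the Hölder bound on the score gives the one-sided Taylor estimate
`log p (y - z) ≥ log p y - ⟪s y, z⟫ - L ‖z‖ ^ (1 + β)`. Averaging against `Z ~ N(0, t I_d)` and
applying Jensen's inequality to `exp` yields `p_t y ≥ p y · exp (-L 𝔼 ‖Z‖ ^ (1 + β))`: the linear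
term has mean zero, and by concavity of `x ↦ x ^ ((1 + β) / 2)` we get
`𝔼 ‖Z‖ ^ (1 + β) ≤ (𝔼 ‖Z‖ ^ 2) ^ ((1 + β) / 2) = (t d) ^ ((1 + β) / 2)`.
-/

open MeasureTheory Real
open scoped RealInnerProductSpace ENNReal

noncomputable section

abbrev Vec (d : ℕ) := EuclideanSpace ℝ (Fin d)

/-- Density at `x` of the Gaussian `N(c, h I_d)` on `ℝ^d`. -/
def gaussD (d : ℕ) (h : ℝ) (c x : Vec d) : ℝ :=
  (2 * π * h) ^ (-(d : ℝ) / 2) * Real.exp (-‖x - c‖ ^ 2 / (2 * h))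

/-- Density of `μ * N(0, h I_d)` for a measure `μ`. -/
def convD (d : ℕ) (μ : Measure (Vec d)) (h : ℝ) (x : Vec d) : ℝ :=
  ∫ u, gaussD d h u x ∂μ

/-- Density of `p * N(0, h I_d)` for a density function `p`. -/
def densConvD (d : ℕ) (p : Vec d → ℝ) (h : ℝ) (y : Vec d) : ℝ :=
  ∫ z, p (y - z) * gaussD d h 0 z

/-- Density of the Gaussian mixture `(1/n) ∑ᵢ N(Xᵢ, h I_d)`. -/
def mixD (d n : ℕ) (X : Fin n → Vec d) (h : ℝ) (x : Vec d) : ℝ :=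
  (n : ℝ)⁻¹ * ∑ i, gaussD d h (X i) x

/-- Score function `∇ log f`. -/
def scoreFn (d : ℕ) (f : Vec d → ℝ) (x : Vec d) : Vec d :=
  gradient (fun y => Real.log (f y)) x

/-- Regularized score `∇f / max(f, ε)`. -/
def regScore (d : ℕ) (f : Vec d → ℝ) (ε : ℝ) (x : Vec d) : Vec d :=
  (max (f x) ε)⁻¹ • gradient f x

/-- Score matching loss `∫ ‖s₁ - s₂‖² f`. -/
def scoreLoss (d : ℕ) (s₁ s₂ : Vec d → Vec d) (f : Vec d → ℝ) : ℝ :=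
  ∫ x, ‖s₁ x - s₂ x‖ ^ 2 * f x

/-- Squared Hellinger distance between densities. -/
def hellSq (d : ℕ) (p q : Vec d → ℝ) : ℝ :=
  ∫ x, (Real.sqrt (p x) - Real.sqrt (q x)) ^ 2

/-- Mean vector of a measure. -/
def meanVec (d : ℕ) (μ : Measure (Vec d)) : Vec d :=
  ∫ y, y ∂μ

/-- `μ` is `α`-subgaussian: `E[exp⟨θ, X - E X⟩] ≤ exp(α²‖θ‖²/2)` for all `θ`. -/
def IsSubgaussianMeasure (d : ℕ) (μ : Measure (Vec d)) (α : ℝ) : Prop :=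
  ∀ θ : Vec d, ∫ x, Real.exp ⟪θ, x - meanVec d μ⟫ ∂μ ≤ Real.exp (α ^ 2 * ‖θ‖ ^ 2 / 2)

/-- Quadratic form of the Hessian of `g` at `x` applied to `v`. -/
def hessQ (d : ℕ) (g : Vec d → ℝ) (x v : Vec d) : ℝ :=
  iteratedFDeriv ℝ 2 g x ![v, v]

open Set Module

section GaussianMoments

variable {E : Type*} [NormedAddCommGroup E] [NormedSpace ℝ E] [FiniteDimensional ℝ E]
  [MeasurableSpace E] [BorelSpace E] (μ : Measure E) [μ.IsAddHaarMeasure] {b : ℝ}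

lemma integrable_rpow_norm_mul_exp_neg_mul_sq_norm (hb : 0 < b) {q : ℝ} (hq : 0 ≤ q) :
    Integrable (fun x : E => ‖x‖ ^ q * exp (-b * ‖x‖ ^ 2)) μ := by
  cases subsingleton_or_nontrivial E
  · rw [← integrableOn_univ]
    exact ((continuous_norm.rpow_const fun _ => Or.inr hq).mul
      (by fun_prop)).continuousOn.integrableOn_compact isCompact_univ
  rw [integrable_fun_norm_addHaar μ (f := fun y => y ^ q * exp (-b * y ^ 2))]
  refine (integrableOn_rpow_mul_exp_neg_mul_sq hb
    (s := (finrank ℝ E - 1 : ℕ) + q) (neg_one_lt_zero.trans_le (by positivity))).congr_fun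
    (fun y (hy : 0 < y) => ?_) measurableSet_Ioi
  beta_reduce
  rw [rpow_add hy, rpow_natCast, smul_eq_mul, mul_assoc]

lemma integral_norm_sq_mul_exp_neg_mul_sq_norm (hb : 0 < b) :
    ∫ x : E, ‖x‖ ^ 2 * exp (-b * ‖x‖ ^ 2) ∂μ
      = finrank ℝ E / (2 * b) * ∫ x : E, exp (-b * ‖x‖ ^ 2) ∂μ := by
  cases subsingleton_or_nontrivial E
  · simp [Subsingleton.elim _ (0 : E), finrank_zero_of_subsingleton]
  -- In polar coordinates both sides are Gamma integrals; then use `Γ(n/2 + 1) = n/2 · Γ(n/2)`.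
  set n : ℝ := (finrank ℝ E : ℝ)
  have hn : 0 < n := Nat.cast_pos.mpr finrank_pos
  have hradial : ∀ q : ℝ, 0 ≤ q → ∀ f : ℝ → ℝ, (∀ y, 0 < y → f y = y ^ q * exp (-b * y ^ 2)) →
      ∫ y in Ioi (0:ℝ), y ^ (finrank ℝ E - 1) • f y
        = b ^ (-(n + q) / 2) * (1 / 2) * Gamma ((n + q) / 2) := by
    intro q hq f hf
    have := integral_rpow_mul_exp_neg_mul_rpow two_pos (q := n - 1 + q) (by linarith) hb
    rw [show n - 1 + q + 1 = n + q by ring] at this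
    rw [← this]
    refine setIntegral_congr_fun measurableSet_Ioi fun y (hy : 0 < y) => ?_
    rw [hf y hy, smul_eq_mul, ← mul_assoc, ← rpow_natCast, Nat.cast_sub finrank_pos,
      ← rpow_add hy, Nat.cast_one, rpow_two]
  rw [integral_fun_norm_addHaar μ (fun y => y ^ 2 * exp (-b * y ^ 2)),
    integral_fun_norm_addHaar μ (fun y => exp (-b * y ^ 2)),
    hradial 2 zero_le_two _ fun y _ => by rw [rpow_two],
    hradial 0 le_rfl _ fun y _ => by rw [rpow_zero, one_mul], add_div, add_zero,
    show (2 : ℝ) / 2 = 1 by norm_num, Gamma_add_one (by positivity),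
    show -(n + 2) / 2 = -n / 2 + -1 by ring, rpow_add hb, rpow_neg_one]
  simp only [nsmul_eq_mul, smul_eq_mul]
  field_simp

end GaussianMoments

section GaussianMeasure

variable {d : ℕ} {t : ℝ}

lemma gaussD_zero (d : ℕ) (t : ℝ) (z : Vec d) :
    gaussD d t 0 z = (2 * π * t) ^ (-(d : ℝ) / 2) * exp (-(2 * t)⁻¹ * ‖z‖ ^ 2) := by
  rw [gaussD, sub_zero]
  congr 2
  ring

lemma gaussD_zero_neg (d : ℕ) (t : ℝ) (z : Vec d) : gaussD d t 0 (-z) = gaussD d t 0 z := by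
  simp only [gaussD, sub_zero, norm_neg]

lemma gaussD_nonneg (ht : 0 < t) (c x : Vec d) : 0 ≤ gaussD d t c x := by
  unfold gaussD; positivity

lemma gaussD_le (ht : 0 < t) (c x : Vec d) : gaussD d t c x ≤ (2 * π * t) ^ (-(d : ℝ) / 2) := by
  refine mul_le_of_le_one_right (by positivity) (exp_le_one_iff.2 ?_)
  exact div_nonpos_of_nonpos_of_nonneg (neg_nonpos.2 (by positivity)) (by positivity)

lemma continuous_gaussD (d : ℕ) (t : ℝ) (c : Vec d) : Continuous (gaussD d t c) := by
  unfold gaussD; fun_prop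

lemma integral_gaussD (ht : 0 < t) : ∫ z, gaussD d t 0 z = 1 := by
  simp_rw [gaussD_zero]
  rw [integral_const_mul, GaussianFourier.integral_rexp_neg_mul_sq_norm (by positivity),
    finrank_euclideanSpace_fin, show π / (2 * t)⁻¹ = 2 * π * t by field_simp,
    ← rpow_add (by positivity), neg_div, neg_add_cancel, rpow_zero]

def gaussianMeasure (d : ℕ) (t : ℝ) : Measure (Vec d) :=
  volume.withDensity fun z => ENNReal.ofReal (gaussD d t 0 z)

lemma integral_gaussianMeasure (ht : 0 < t) (f : Vec d → ℝ) :
    ∫ z, f z ∂gaussianMeasure d t = ∫ z, f z * gaussD d t 0 z := by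
  rw [gaussianMeasure, integral_withDensity_eq_integral_toReal_smul
    (continuous_gaussD d t 0).measurable.ennreal_ofReal
    (.of_forall fun _ => ENNReal.ofReal_lt_top)]
  simp_rw [ENNReal.toReal_ofReal (gaussD_nonneg ht _ _), smul_eq_mul, mul_comm]

lemma integrable_gaussianMeasure_iff (ht : 0 < t) {f : Vec d → ℝ} :
    Integrable f (gaussianMeasure d t) ↔ Integrable (fun z => f z * gaussD d t 0 z) := by
  rw [gaussianMeasure, integrable_withDensity_iff_integrable_smul'
    (continuous_gaussD d t 0).measurable.ennreal_ofReal
    (.of_forall fun _ => ENNReal.ofReal_lt_top)]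
  simp_rw [ENNReal.toReal_ofReal (gaussD_nonneg ht _ _), smul_eq_mul, mul_comm]

lemma isProbabilityMeasure_gaussianMeasure (ht : 0 < t) :
    IsProbabilityMeasure (gaussianMeasure d t) := by
  have hint := integral_gaussD (d := d) ht
  constructor
  rw [gaussianMeasure, withDensity_apply _ MeasurableSet.univ, Measure.restrict_univ,
    ← ofReal_integral_eq_lintegral_ofReal (.of_integral_ne_zero (by simp [hint]))
      (.of_forall (gaussD_nonneg ht 0)), hint, ENNReal.ofReal_one]

lemma integrable_gaussianMeasure_of_integrable (ht : 0 < t) {f : Vec d → ℝ} (hf : Integrable f) :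
    Integrable f (gaussianMeasure d t) :=
  (integrable_gaussianMeasure_iff ht).2 <|
    hf.mul_bdd (continuous_gaussD d t 0).aestronglyMeasurable (.of_forall fun z => by
      rw [Real.norm_of_nonneg (gaussD_nonneg ht 0 z)]; exact gaussD_le ht 0 z)

lemma densConvD_eq_integral_gaussianMeasure (ht : 0 < t) (p : Vec d → ℝ) (y : Vec d) :
    densConvD d p t y = ∫ z, p (y - z) ∂gaussianMeasure d t :=
  (integral_gaussianMeasure ht _).symm

lemma integrable_rpow_norm_gaussianMeasure (ht : 0 < t) {q : ℝ} (hq : 0 ≤ q) :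
    Integrable (fun z : Vec d => ‖z‖ ^ q) (gaussianMeasure d t) := by
  rw [integrable_gaussianMeasure_iff ht]
  simp_rw [gaussD_zero, mul_left_comm (‖_‖ ^ q)]
  exact (integrable_rpow_norm_mul_exp_neg_mul_sq_norm volume (by positivity) hq).const_mul _

lemma integrable_inner_gaussianMeasure (ht : 0 < t) (a : Vec d) :
    Integrable (fun z : Vec d => ⟪a, z⟫) (gaussianMeasure d t) :=
  ((integrable_rpow_norm_gaussianMeasure ht zero_le_one).const_mul ‖a‖).mono'
    (by fun_prop : Continuous fun z : Vec d => ⟪a, z⟫).aestronglyMeasurable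
    (.of_forall fun z => by
      simpa only [rpow_one, Real.norm_eq_abs] using abs_real_inner_le_norm a z)

lemma integral_inner_gaussianMeasure (ht : 0 < t) (a : Vec d) :
    ∫ z, ⟪a, z⟫ ∂gaussianMeasure d t = 0 := by
  have hsymm := integral_neg_eq_self (fun z : Vec d => ⟪a, z⟫ * gaussD d t 0 z) volume
  simp only [inner_neg_right, gaussD_zero_neg, neg_mul, integral_neg] at hsymm
  rw [integral_gaussianMeasure ht]
  linarith

lemma integral_norm_sq_gaussianMeasure (ht : 0 < t) :
    ∫ z, ‖z‖ ^ 2 ∂gaussianMeasure d t = t * d := by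
  have hb : 0 < (2 * t)⁻¹ := by positivity
  have h := integral_norm_sq_mul_exp_neg_mul_sq_norm (volume : Measure (Vec d)) hb
  rw [finrank_euclideanSpace_fin, show (d : ℝ) / (2 * (2 * t)⁻¹) = t * d by field_simp] at h
  calc ∫ z, ‖z‖ ^ 2 ∂gaussianMeasure d t
      = (2 * π * t) ^ (-(d : ℝ) / 2) * ∫ z : Vec d, ‖z‖ ^ 2 * exp (-(2 * t)⁻¹ * ‖z‖ ^ 2) := by
        simp_rw [integral_gaussianMeasure ht, gaussD_zero, mul_left_comm (‖_‖ ^ 2)]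
        exact integral_const_mul _ _
    _ = t * d * ∫ z, gaussD d t 0 z := by
        simp_rw [h, gaussD_zero, integral_const_mul]
        ring
    _ = t * d := by rw [integral_gaussD ht, mul_one]

lemma integral_rpow_norm_gaussianMeasure_le (ht : 0 < t) {q : ℝ} (hq₀ : 0 ≤ q) (hq₂ : q ≤ 2) :
    ∫ z, ‖z‖ ^ q ∂gaussianMeasure d t ≤ (t * d) ^ (q / 2) := by
  have := isProbabilityMeasure_gaussianMeasure (d := d) ht
  have hpow : ∀ z : Vec d, (‖z‖ ^ 2) ^ (q / 2) = ‖z‖ ^ q := fun z => by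
    rw [← rpow_natCast, ← rpow_mul (norm_nonneg z), Nat.cast_ofNat, mul_div_cancel₀ q two_ne_zero]
  have hsq : Integrable (fun z : Vec d => ‖z‖ ^ 2) (gaussianMeasure d t) := by
    simpa only [rpow_two] using integrable_rpow_norm_gaussianMeasure (d := d) ht zero_le_two
  have hJensen := (concaveOn_rpow (p := q / 2) (by positivity) (by linarith)).le_map_integral
    (continuousOn_id.rpow_const fun _ _ => Or.inr (by positivity)) isClosed_Ici
    (.of_forall fun z => sq_nonneg ‖z‖) hsq
    (by simpa only [Function.comp_def, hpow] using integrable_rpow_norm_gaussianMeasure ht hq₀)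
  simpa only [hpow, integral_norm_sq_gaussianMeasure ht] using hJensen

end GaussianMeasure

section HolderGradient

variable {E : Type*} [NormedAddCommGroup E] [InnerProductSpace ℝ E] [CompleteSpace E]

lemma HasGradientAt.hasDerivAt_comp_sub_smul {f : E → ℝ} {y z : E} {u : ℝ} {g : E}
    (hf : HasGradientAt f g (y - u • z)) :
    HasDerivAt (fun u : ℝ => f (y - u • z)) (-⟪g, z⟫) u := by
  have hline : HasDerivAt (fun u : ℝ => y - u • z) (-z) u := by
    simpa using ((hasDerivAt_id u).smul_const z).const_sub y
  have := hf.hasFDerivAt.comp_hasDerivAt u hline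
  rw [InnerProductSpace.toDual_apply_apply, inner_neg_right] at this
  exact this

lemma sub_inner_gradient_sub_rpow_le {f : E → ℝ} (hf : Differentiable ℝ f) {L β : ℝ}
    (hL : 0 ≤ L) (hβ : 0 ≤ β)
    (hholder : ∀ x y, ‖gradient f x - gradient f y‖ ≤ L * ‖x - y‖ ^ β) (y z : E) :
    f y - ⟪gradient f y, z⟫ - L * ‖z‖ ^ (β + 1) ≤ f (y - z) := by
  set g : ℝ → ℝ := fun u => f (y - u • z) + u * ⟪gradient f y, z⟫
  have hderiv : ∀ u : ℝ,
      HasDerivAt g (⟪gradient f y - gradient f (y - u • z), z⟫) u := fun u => by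
    rw [inner_sub_left, sub_eq_neg_add]
    exact ((hf _).hasGradientAt.hasDerivAt_comp_sub_smul).add
      (by simpa using (hasDerivAt_id u).mul_const ⟪gradient f y, z⟫)
  have hbound : ∀ u ∈ Icc (0 : ℝ) 1,
      ‖⟪gradient f y - gradient f (y - u • z), z⟫‖ ≤ L * ‖z‖ ^ (β + 1) := by
    intro u hu
    have hshift : ‖y - (y - u • z)‖ ≤ ‖z‖ := by
      rw [sub_sub_cancel, norm_smul, Real.norm_eq_abs, abs_of_nonneg hu.1]
      exact mul_le_of_le_one_left (norm_nonneg z) hu.2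
    calc ‖⟪gradient f y - gradient f (y - u • z), z⟫‖
        ≤ ‖gradient f y - gradient f (y - u • z)‖ * ‖z‖ := norm_inner_le_norm _ _
      _ ≤ L * ‖z‖ ^ β * ‖z‖ := by
        gcongr
        exact (hholder _ _).trans (by gcongr)
      _ = L * ‖z‖ ^ (β + 1) := by
        rw [mul_assoc, rpow_add_one' (norm_nonneg z) (by linarith)]
  have hmvt := (convex_Icc (0 : ℝ) 1).norm_image_sub_le_of_norm_hasDerivWithin_le
    (fun u _ => (hderiv u).hasDerivWithinAt) hbound (left_mem_Icc.2 zero_le_one)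
    (right_mem_Icc.2 zero_le_one)
  simp only [g, one_smul, zero_smul, sub_zero, one_mul, zero_mul, add_zero, norm_one, mul_one,
    Real.norm_eq_abs] at hmvt
  linarith [neg_abs_le (f (y - z) + ⟪gradient f y, z⟫ - f y)]

end HolderGradient


lemma mul_exp_integral_le_integral {α : Type*} [MeasurableSpace α] {μ : Measure α}
    [IsProbabilityMeasure μ] {F g : α → ℝ} {c : ℝ} (hc : 0 < c) (hF : Integrable F μ)
    (hg : Integrable g μ) (hle : ∀ x, c * exp (F x) ≤ g x) :
    c * exp (∫ x, F x ∂μ) ≤ ∫ x, g x ∂μ := by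
  have hexp : Integrable (fun x => exp (F x)) μ :=
    (hg.const_mul c⁻¹).mono' (continuous_exp.comp_aestronglyMeasurable hF.1)
      (.of_forall fun x => by
        rw [Real.norm_of_nonneg (exp_pos _).le]; exact (le_inv_mul_iff₀ hc).2 (hle x))
  calc c * exp (∫ x, F x ∂μ) ≤ c * ∫ x, exp (F x) ∂μ := by
        gcongr
        exact convexOn_exp.map_integral_le continuousOn_exp isClosed_univ
          (.of_forall fun _ => mem_univ _) hF hexp
    _ = ∫ x, c * exp (F x) ∂μ := (integral_const_mul _ _).symm
    _ ≤ ∫ x, g x ∂μ := integral_mono (hexp.const_mul c) hg hle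

lemma mul_exp_neg_le_densConvD {d : ℕ} {p : Vec d → ℝ} {L β t : ℝ}
    (hpos : ∀ x, 0 < p x) (hC1 : ContDiff ℝ 1 p) (hp : Integrable p)
    (hβ : 0 ≤ β) (hβ1 : β ≤ 1) (hL : 0 ≤ L)
    (hholder : ∀ x y : Vec d, ‖scoreFn d p x - scoreFn d p y‖ ≤ L * ‖x - y‖ ^ β)
    (ht : 0 < t) (y : Vec d) :
    p y * exp (-(L * (t * d) ^ ((1 + β) / 2))) ≤ densConvD d p t y := by
  have := isProbabilityMeasure_gaussianMeasure (d := d) ht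
  set F : Vec d → ℝ := fun z => -⟪scoreFn d p y, z⟫ - L * ‖z‖ ^ (β + 1)
  have hinner : Integrable (fun z => -⟪scoreFn d p y, z⟫) (gaussianMeasure d t) :=
    (integrable_inner_gaussianMeasure ht _).neg
  have hrpow : Integrable (fun z : Vec d => L * ‖z‖ ^ (β + 1)) (gaussianMeasure d t) :=
    (integrable_rpow_norm_gaussianMeasure ht (by linarith)).const_mul L
  have hmean : -(L * (t * d) ^ ((1 + β) / 2)) ≤ ∫ z, F z ∂gaussianMeasure d t := by
    rw [integral_sub hinner hrpow, integral_neg, integral_inner_gaussianMeasure ht,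
      integral_const_mul, neg_zero, zero_sub, add_comm 1 β]
    gcongr
    exact integral_rpow_norm_gaussianMeasure_le ht (by linarith) (by linarith)
  have hlog : Differentiable ℝ fun x => log (p x) :=
    (hC1.differentiable one_ne_zero).log fun x => (hpos x).ne'
  have hpointwise : ∀ z, p y * exp (F z) ≤ p (y - z) := fun z =>
    calc p y * exp (F z) = exp (log (p y) - ⟪scoreFn d p y, z⟫ - L * ‖z‖ ^ (β + 1)) := by
          rw [sub_sub, sub_eq_add_neg, exp_add, exp_log (hpos y), neg_add']
      _ ≤ exp (log (p (y - z))) :=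
          exp_le_exp.2 <| sub_inner_gradient_sub_rpow_le hlog hL hβ hholder y z
      _ = p (y - z) := exp_log (hpos _)
  rw [densConvD_eq_integral_gaussianMeasure ht]
  calc p y * exp (-(L * (t * d) ^ ((1 + β) / 2))) ≤ p y * exp (∫ z, F z ∂gaussianMeasure d t) :=
        mul_le_mul_of_nonneg_left (exp_le_exp.2 hmean) (hpos y).le
    _ ≤ ∫ z, p (y - z) ∂gaussianMeasure d t :=
        mul_exp_integral_le_integral (hpos y) (hinner.sub hrpow)
          (integrable_gaussianMeasure_of_integrable ht (hp.comp_sub_left y)) hpointwise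

/-- Log-ratio bound for a density with `(L, β)`-Hölder score and its
Gaussian smoothing: `log(p(y)/p_t(y)) ≤ L (td)^{(1+β)/2}`. -/
theorem log_ratio_bound_holder (d : ℕ) (p : Vec d → ℝ) (L β : ℝ)
    (hpos : ∀ x, 0 < p x) (hC1 : ContDiff ℝ 1 p) (hint : ∫ x, p x = 1)
    (hβ : 0 < β) (hβ1 : β ≤ 1) (hL : 0 ≤ L)
    (hholder : ∀ x y : Vec d, ‖scoreFn d p x - scoreFn d p y‖ ≤ L * ‖x - y‖ ^ β) :
    ∀ t : ℝ, 0 < t → ∀ y : Vec d,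
      Real.log (p y / densConvD d p t y) ≤ L * (t * (d : ℝ)) ^ ((1 + β) / 2) := by
  intro t ht y
  have hlow := mul_exp_neg_le_densConvD hpos hC1 (.of_integral_ne_zero (by simp [hint]))
    hβ.le hβ1 hL hholder ht y
  have hpy := hpos y
  have hconv : 0 < densConvD d p t y := (mul_pos hpy (exp_pos _)).trans_le hlow
  have hlog := log_le_log (mul_pos hpy (exp_pos _)) hlow
  rw [log_mul hpy.ne' (exp_pos _).ne', log_exp] at hlog
  rw [log_div hpy.ne' hconv.ne']
  linarith
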